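/- Let X be a 2-dimensional matroidal fan in R^n (the Bergman fan of a loopless rank-3 matroid). Then dim F_2(X) = 1 - |E(X)| + |F(X)|, where |E(X)| and |F(X)| are the numbers of rays and 2-dimensional cones of X. Equivalently, the Euler characteristic count (number of 0-cones) - (number of rays) + (number of 2-cones) of the fan equals dim F_2(X). -/

import Mathlib

open scoped BigOperators
open Polynomial

/-- The rank of a set `S` in a matroid `M`: the largest cardinality of an independent
subset of `S`. -/
noncomputable def mrank {α : Type*} (M : Matroid α) (S : Set α) : ℕ :=
  sSup {n | ∃ I, I ⊆ S ∧ M.Indep I ∧ I.ncard = n}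

/-- A matroid is loopless if every singleton of the ground set is independent. -/
def MLoopless {α : Type*} (M : Matroid α) : Prop := ∀ a ∈ M.E, M.Indep {a}

/-- The ambient space `ℝ^{n+1}/ℝ·1` of the (projective) Bergman fan. -/
abbrev BergSpace (n : ℕ) :=
  (Fin (n + 1) → ℝ) ⧸ (Submodule.span ℝ {(fun _ => (1 : ℝ) : Fin (n + 1) → ℝ)})

/-- The class `ē_F ∈ ℝ^{n+1}/ℝ·1` of the indicator vector `e_F = Σ_{i ∈ F} e_i`. -/
noncomputable def eQ {n : ℕ} (F : Set (Fin (n + 1))) : BergSpace n :=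
  Submodule.Quotient.mk (F.indicator (fun _ => (1 : ℝ)))

/-- The cone `σ_𝓕 = {-Σ_F t_F ē_F : t_F ≥ 0}` of the Bergman fan associated to a finite
chain `c` of flats. -/
noncomputable def chainCone {n : ℕ} (c : Finset (Set (Fin (n + 1)))) : Set (BergSpace n) :=
  {x | ∃ t : Set (Fin (n + 1)) → ℝ, (∀ F, 0 ≤ t F) ∧ x = -∑ F ∈ c, t F • eQ F}

/-- A proper nonempty flat of `M`. -/
def ProperFlat {α : Type*} (M : Matroid α) (F : Set α) : Prop :=
  M.IsFlat F ∧ F.Nonempty ∧ F ≠ Set.univ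

/-- The (projective) Bergman fan of a matroid on `{0, …, n}`, as the collection of the
cones `σ_𝓕` over all chains `𝓕` of proper nonempty flats. -/
noncomputable def bergmanFan {n : ℕ} (M : Matroid (Fin (n + 1))) : Set (Set (BergSpace n)) :=
  {σ | ∃ c : Finset (Set (Fin (n + 1))), (∀ F ∈ c, ProperFlat M F) ∧
    IsChain (· ⊆ ·) (↑c : Set (Set (Fin (n + 1)))) ∧ σ = chainCone c}

/-- `F_p(Σ) ⊆ ⋀^p V`: the span of the wedges `v₁ ∧ ⋯ ∧ v_p` of vectors lying in a common
cone of `Σ`, realized inside the exterior algebra of `V`. -/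
noncomputable def FpFan {V : Type*} [AddCommGroup V] [Module ℝ V] (S : Set (Set V)) (p : ℕ) :
    Submodule ℝ (ExteriorAlgebra ℝ V) :=
  Submodule.span ℝ {w | ∃ σ ∈ S, ∃ v : Fin p → V, (∀ i, v i ∈ σ) ∧
    w = (List.ofFn fun i => ExteriorAlgebra.ι ℝ (v i)).prod}

/-!
In rank 3 every proper flat is a point (rank 1) or a line (rank 2), the 2-cones of the Bergman fan
are the flags `p ⊂ L`, and `F₂` is spanned by the wedges `e_p ∧ e_L`. The claim is the Euler
characteristic of the complex `0 → ℝ → ℝ^{flats} → ℝ^{flags} → F₂ → 0`, with maps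
`y ↦ (y_p + y_L)_{p ⊂ L}` and `x ↦ ∑ x_{pL} e_p ∧ e_L`, once it is shown to be exact.

* The composite vanishes because `∑_{p ⊂ L} e_p = e_L`, and `∑_{L ⊃ p} e_L` is a multiple of `e_p`
  modulo the all-ones vector.
* The kernel of the first map is spanned by the sign vector (`1` on points, `-1` on lines),
  since any two points lie on a common line.
* If `∑ x_{pL} e_p ∧ e_L = 0`, evaluating it on the 2-forms `(δ_a - δ_c) ∧ (δ_b - δ_c)` shows that
  the coordinates `B(a, b)` of `∑ x_{pL} 𝟙_p ∧ 𝟙_L` satisfy `B(a, b) = A a - A b`. For `a ∈ p` and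
  `b ∈ L \ p` only the flags `(p, L)` and `(cl b, L)` contribute to `B(a, b)`, so
  `x_{pL} - x_{(cl b) L} = A a - A b`, which is what `x` needs to be a coboundary.
-/

open Set

lemma coe_mrank {α : Type*} [Finite α] (M : Matroid α) (S : Set α) :
    (mrank M S : ℕ∞) = M.eRk S := by
  obtain ⟨I, hI⟩ := M.exists_isBasis' S
  have hgreatest : IsGreatest {n | ∃ J, J ⊆ S ∧ M.Indep J ∧ J.ncard = n} I.ncard := by
    refine ⟨⟨I, hI.subset, hI.indep, rfl⟩, ?_⟩
    rintro _ ⟨J, hJS, hJ, rfl⟩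
    have hle : J.encard ≤ I.encard := hI.encard_eq_eRk ▸ hJ.encard_le_eRk_of_subset hJS
    rwa [← J.toFinite.cast_ncard_eq, ← I.toFinite.cast_ncard_eq, Nat.cast_le] at hle
  rw [mrank, hgreatest.csSup_eq, ← hI.encard_eq_eRk, I.toFinite.cast_ncard_eq]

lemma MLoopless.loopless {α : Type*} {M : Matroid α} (h : MLoopless M) : M.Loopless :=
  Matroid.loopless_iff_forall_isNonloop.2 fun a ha ↦ Matroid.indep_singleton.1 (h a ha)

lemma finrank_range_add_finrank_eq_of_ker_eq_range {K U V W : Type*} [Field K] [AddCommGroup U]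
    [Module K U] [AddCommGroup V] [Module K V] [AddCommGroup W] [Module K W]
    [FiniteDimensional K U] [FiniteDimensional K V] {d : U →ₗ[K] V} {φ : V →ₗ[K] W}
    (h : LinearMap.ker φ = LinearMap.range d) :
    Module.finrank K (LinearMap.range φ) + Module.finrank K U =
      Module.finrank K V + Module.finrank K (LinearMap.ker d) := by
  have hφ := LinearMap.finrank_range_add_finrank_ker φ
  have hd := LinearMap.finrank_range_add_finrank_ker d
  rw [h] at hφ
  omega

section WedgeDual

variable {R V : Type*} [CommRing R] [AddCommGroup V] [Module R V]

noncomputable def wedgeDual (f g : Module.Dual R V) : ExteriorAlgebra R V →ₗ[R] R :=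
  ExteriorAlgebra.liftAlternating
    (Pi.single 2 (Matrix.detRowAlternating.compLinearMap (LinearMap.pi ![f, g])))

lemma wedgeDual_ι_mul_ι (f g : Module.Dual R V) (u v : V) :
    wedgeDual f g (ExteriorAlgebra.ι R u * ExteriorAlgebra.ι R v) = f u * g v - f v * g u := by
  rw [wedgeDual, ExteriorAlgebra.liftAlternating_ι_mul, ExteriorAlgebra.liftAlternating_ι]
  simp only [Pi.single_eq_same, AlternatingMap.curryLeft_compLinearMap,
    AlternatingMap.compLinearMap_apply, AlternatingMap.curryLeft_apply_apply]
  exact (Matrix.det_fin_two _).trans (by simp [mul_comm])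

end WedgeDual

section Plucker

variable {ι α : Type*} {F G : Set α} {a b : α}

noncomputable def pluckerCoord (F G : Set α) (a b : α) : ℝ :=
  F.indicator 1 a * G.indicator 1 b - F.indicator 1 b * G.indicator 1 a

lemma pluckerCoord_eq_zero (hF : a ∈ F ↔ b ∈ F) (hG : a ∈ G ↔ b ∈ G) :
    pluckerCoord F G a b = 0 := by
  have key : ∀ s : Set α, (a ∈ s ↔ b ∈ s) → s.indicator (1 : α → ℝ) b = s.indicator 1 a :=
    fun s hs ↦ by
      by_cases ha : a ∈ s
      · rw [indicator_of_mem ha, indicator_of_mem (hs.1 ha), Pi.one_apply, Pi.one_apply]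
      · rw [indicator_of_notMem ha, indicator_of_notMem (mt hs.2 ha)]
  rw [pluckerCoord, key F hF, key G hG, mul_comm, sub_self]

lemma sum_mul_indicator_one_mul_indicator_one [Fintype ι] (x : ι → ℝ) (s t : ι → Set α)
    (i₀ : ι) (h : ∀ i, a ∈ s i ∧ b ∈ t i ↔ i = i₀) :
    ∑ i, x i * ((s i).indicator 1 a * (t i).indicator 1 b) = x i₀ := by
  rw [Fintype.sum_eq_single i₀ fun i hi ↦ ?_]
  · simp [indicator_of_mem ((h i₀).2 rfl).1, indicator_of_mem ((h i₀).2 rfl).2]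
  · by_cases hs : a ∈ s i
    · simp [indicator_of_notMem fun ht ↦ hi ((h i).1 ⟨hs, ht⟩)]
    · simp [indicator_of_notMem hs]

end Plucker

section BergSpace

variable {n : ℕ}

lemma mk_indicator_eq_eQ (F : Set (Fin (n + 1))) :
    (Submodule.Quotient.mk (F.indicator 1) : BergSpace n) = eQ F := rfl

lemma mk_one_eq_zero : (Submodule.Quotient.mk (1 : Fin (n + 1) → ℝ) : BergSpace n) = 0 :=
  (Submodule.Quotient.mk_eq_zero _).2 (Submodule.mem_span_singleton_self _)

noncomputable def coordDiff (a b : Fin (n + 1)) : BergSpace n →ₗ[ℝ] ℝ :=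
  Submodule.liftQ _ (LinearMap.proj (R := ℝ) (φ := fun _ ↦ ℝ) a - LinearMap.proj b) <| by
    rw [Submodule.span_le, Set.singleton_subset_iff, SetLike.mem_coe, LinearMap.mem_ker]
    exact sub_self (1 : ℝ)

lemma coordDiff_eQ (a b : Fin (n + 1)) (F : Set (Fin (n + 1))) :
    coordDiff a b (eQ F) = F.indicator 1 a - F.indicator 1 b := by
  rw [← mk_indicator_eq_eQ, coordDiff, Submodule.liftQ_apply, LinearMap.sub_apply,
    LinearMap.proj_apply, LinearMap.proj_apply]

lemma chainCone_subset_span (c : Finset (Set (Fin (n + 1)))) :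
    chainCone c ⊆ Submodule.span ℝ (eQ '' (c : Set (Set (Fin (n + 1))))) := by
  rintro _ ⟨t, -, rfl⟩
  exact neg_mem (Submodule.sum_mem _ fun F hF ↦
    Submodule.smul_mem _ _ (Submodule.subset_span (mem_image_of_mem _ hF)))

lemma neg_eQ_mem_chainCone {c : Finset (Set (Fin (n + 1)))} {F : Set (Fin (n + 1))}
    (hF : F ∈ c) : -eQ F ∈ chainCone c := by
  classical
  refine ⟨fun G ↦ if G = F then 1 else 0, fun G ↦ by positivity, ?_⟩
  simp [ite_smul, hF]

end BergSpace

namespace Matroid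

section PointsAndLines

variable {α : Type*} {M : Matroid α} {F G L P S : Set α} {a : α}

lemma IsFlat.closure_subset_of_subset (hF : M.IsFlat F) (hSF : S ⊆ F) : M.closure S ⊆ F :=
  hF.closure ▸ M.closure_subset_closure hSF

lemma IsFlat.eq_of_subset_of_eRk_le [M.RankFinite] (hF : M.IsFlat F) (hG : M.IsFlat G)
    (hFG : F ⊆ G) (hr : M.eRk G ≤ M.eRk F) : F = G := by
  rw [← hF.closure, ← hG.closure]
  exact (M.isRkFinite_set F).closure_eq_closure_of_subset_of_eRk_ge_eRk hFG hr

lemma IsFlat.eRk_lt_eRk_of_ssubset [M.RankFinite] (hF : M.IsFlat F) (hG : M.IsFlat G)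
    (hFG : F ⊂ G) : M.eRk F < M.eRk G :=
  lt_of_not_ge fun hr ↦ hFG.ne (hF.eq_of_subset_of_eRk_le hG hFG.subset hr)

def IsPoint (M : Matroid α) (P : Set α) : Prop := M.IsFlat P ∧ M.eRk P = 1

def IsLine (M : Matroid α) (L : Set α) : Prop := M.IsFlat L ∧ M.eRk L = 2

lemma IsPoint.nonempty (hP : M.IsPoint P) : P.Nonempty :=
  nonempty_iff_ne_empty.2 fun h ↦ by simpa [h] using hP.2

lemma IsPoint.not_isLine (hP : M.IsPoint P) : ¬M.IsLine P := fun hL ↦ by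
  simpa [hP.2] using hL.2

lemma IsLine.not_isPoint (hL : M.IsLine L) : ¬M.IsPoint L := fun hP ↦ hP.not_isLine hL

lemma isPoint_closure_singleton [M.Loopless] (ha : a ∈ M.E) : M.IsPoint (M.closure {a}) :=
  ⟨M.isFlat_closure _, by rw [eRk_closure_eq, eRk_singleton_eq ha]⟩

lemma IsPoint.isLine_closure_insert (hP : M.IsPoint P) (ha : a ∈ M.E \ P) :
    M.IsLine (M.closure (insert a P)) := by
  refine ⟨M.isFlat_closure _, ?_⟩
  rw [eRk_closure_eq, eRk_insert_eq_add_one (by rwa [hP.1.closure]), hP.2]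
  rfl

variable [M.RankFinite]

lemma IsLine.eq_closure_insert (hL : M.IsLine L) (hP : M.IsPoint P) (hPL : P ⊆ L)
    (ha : a ∈ L \ P) : L = M.closure (insert a P) := by
  have hK := hP.isLine_closure_insert ⟨hL.1.subset_ground ha.1, ha.2⟩
  refine (hK.1.eq_of_subset_of_eRk_le hL.1 ?_ (by rw [hL.2, hK.2])).symm
  exact hL.1.closure_subset_of_subset (insert_subset ha.1 hPL)

variable [M.Loopless]

lemma IsPoint.eq_closure_singleton (hP : M.IsPoint P) (ha : a ∈ P) : P = M.closure {a} := by
  have haE : a ∈ M.E := hP.1.subset_ground ha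
  refine ((isPoint_closure_singleton haE).1.eq_of_subset_of_eRk_le hP.1 ?_ ?_).symm
  · exact hP.1.closure_subset_of_subset (singleton_subset_iff.2 ha)
  · rw [hP.2, (isPoint_closure_singleton haE).2]

lemma IsPoint.subset_of_mem (hP : M.IsPoint P) (hF : M.IsFlat F) (haP : a ∈ P) (haF : a ∈ F) :
    P ⊆ F := by
  rw [hP.eq_closure_singleton haP]
  exact hF.closure_subset_of_subset (singleton_subset_iff.2 haF)

lemma IsPoint.mem_iff_mem_of_isFlat {b : α} (hP : M.IsPoint P) (ha : a ∈ P) (hb : b ∈ P)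
    (hF : M.IsFlat F) : a ∈ F ↔ b ∈ F :=
  ⟨fun haF ↦ hP.subset_of_mem hF ha haF hb, fun hbF ↦ hP.subset_of_mem hF hb hbF ha⟩

end PointsAndLines

variable {α : Type*} {M : Matroid α}

abbrev ProperFlats (M : Matroid α) := {F : Set α // ProperFlat M F}

abbrev Flags (M : Matroid α) :=
  {q : Set α × Set α // ProperFlat M q.1 ∧ ProperFlat M q.2 ∧ q.1 ⊂ q.2}

abbrev Flags.fst (c : M.Flags) : M.ProperFlats := ⟨c.1.1, c.2.1⟩

abbrev Flags.snd (c : M.Flags) : M.ProperFlats := ⟨c.1.2, c.2.2.1⟩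

noncomputable instance [Finite α] : Fintype M.ProperFlats := Fintype.ofFinite _

noncomputable instance [Finite α] : Fintype M.Flags := Fintype.ofFinite _

def flagBoundary (M : Matroid α) : (M.ProperFlats → ℝ) →ₗ[ℝ] (M.Flags → ℝ) :=
  LinearMap.funLeft ℝ ℝ Flags.fst + LinearMap.funLeft ℝ ℝ Flags.snd

open Classical in
noncomputable def pointSign (M : Matroid α) : M.ProperFlats → ℝ :=
  fun F ↦ if M.IsPoint F.1 then 1 else -1

-- the `(a, b)` coordinate of `∑ x c • 𝟙_{c.1} ∧ 𝟙_{c.2}` in `⋀² ℝ^α`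
noncomputable def flagPlucker [Finite α] (x : M.Flags → ℝ) (a b : α) : ℝ :=
  ∑ c, x c * pluckerCoord c.1.1 c.1.2 a b

lemma flagPlucker_swap [Finite α] (x : M.Flags → ℝ) (a b : α) :
    flagPlucker x b a = -flagPlucker x a b := by
  simp only [flagPlucker, pluckerCoord, ← Finset.sum_neg_distrib]
  congr! 1 with c
  ring

lemma flagPlucker_eq_zero_of_mem [Finite α] [M.Loopless] {P : Set α} {a b : α}
    (x : M.Flags → ℝ) (hP : M.IsPoint P) (ha : a ∈ P) (hb : b ∈ P) : flagPlucker x a b = 0 := by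
  refine Finset.sum_eq_zero fun c _ ↦ ?_
  rw [pluckerCoord_eq_zero (hP.mem_iff_mem_of_isFlat ha hb c.2.1.1)
    (hP.mem_iff_mem_of_isFlat ha hb c.2.2.1.1), mul_zero]

section RankThree

variable [Finite α] [M.Loopless] (hE : M.E = univ) (hr : M.eRank = 3)
include hE hr

section

variable {F G : Set α}

lemma properFlat_iff : ProperFlat M F ↔ M.IsPoint F ∨ M.IsLine F := by
  refine ⟨fun ⟨hF, ⟨a, ha⟩, hne⟩ ↦ ?_, ?_⟩
  · have hlow : 1 ≤ M.eRk F := by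
      rw [← eRk_singleton_eq (hE ▸ mem_univ a)]
      exact M.eRk_mono (singleton_subset_iff.2 ha)
    have hhigh : M.eRk F < 3 := by
      rw [← hr, ← eRk_ground]
      exact hF.eRk_lt_eRk_of_ssubset M.ground_isFlat (hE ▸ ssubset_univ_iff.2 hne)
    obtain ⟨k, hk⟩ := ENat.ne_top_iff_exists.1 (M.isRkFinite_set F).eRk_lt_top.ne
    rw [← hk] at hlow hhigh
    norm_cast at hlow hhigh
    interval_cases k
    · exact Or.inl ⟨hF, hk.symm⟩
    · exact Or.inr ⟨hF, hk.symm⟩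
  · have key : M.IsFlat F → M.eRk F ≠ 0 → M.eRk F ≠ 3 → ProperFlat M F := fun hF h0 h3 ↦
      ⟨hF, nonempty_iff_ne_empty.2 (by rintro rfl; simp at h0),
        by rintro rfl; rw [eRk_univ_eq, hr] at h3; exact h3 rfl⟩
    rintro (⟨hF, hk⟩ | ⟨hF, hk⟩) <;> exact key hF (by simp [hk]) (by rw [hk]; decide)

lemma flag_iff : (ProperFlat M F ∧ ProperFlat M G ∧ F ⊂ G) ↔
    (M.IsPoint F ∧ M.IsLine G ∧ F ⊆ G) := by
  rw [properFlat_iff hE hr, properFlat_iff hE hr]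
  constructor
  · rintro ⟨hF, hG, hFG⟩
    have hlt : M.eRk F < M.eRk G := by
      obtain ⟨hF, -⟩ | ⟨hF, -⟩ := hF <;> obtain ⟨hG, -⟩ | ⟨hG, -⟩ := hG <;>
        exact hF.eRk_lt_eRk_of_ssubset hG hFG
    obtain hF | hF := hF <;> obtain hG | hG := hG <;> rw [hF.2, hG.2] at hlt
    all_goals first | exact ⟨hF, hG, hFG.subset⟩ | exact absurd hlt (by decide)
  · rintro ⟨hF, hG, hFG⟩
    exact ⟨Or.inl hF, Or.inr hG, hFG.ssubset_of_ne fun h ↦ hF.not_isLine (h ▸ hG)⟩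

lemma exists_isPoint : ∃ P : M.ProperFlats, M.IsPoint P.1 := by
  obtain ⟨e, -⟩ : M.E.Nonempty := by
    rw [nonempty_iff_ne_empty]
    intro h
    simpa [h, hr] using M.eRank_le_encard_ground
  have hP := isPoint_closure_singleton (M := M) (hE ▸ mem_univ e)
  exact ⟨⟨_, (properFlat_iff hE hr).2 (Or.inl hP)⟩, hP⟩

end

variable {L P : Set α} {a b : α}

lemma Flags.isPoint_fst (c : M.Flags) : M.IsPoint c.1.1 := ((flag_iff hE hr).1 c.2).1

lemma Flags.isLine_snd (c : M.Flags) : M.IsLine c.1.2 := ((flag_iff hE hr).1 c.2).2.1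

def Flags.ofSubset (hP : M.IsPoint P) (hL : M.IsLine L) (hPL : P ⊆ L) : M.Flags :=
  ⟨(P, L), (flag_iff hE hr).2 ⟨hP, hL, hPL⟩⟩

def Flags.ofMemLine (hL : M.IsLine L) (ha : a ∈ L) : M.Flags :=
  Flags.ofSubset hE hr (isPoint_closure_singleton (hE ▸ mem_univ a)) hL
    (hL.1.closure_subset_of_subset (singleton_subset_iff.2 ha))

lemma Flags.eq_of_mem {c c' : M.Flags} (ha : a ∈ c.1.1) (ha' : a ∈ c'.1.1)
    (hb : b ∈ c.1.2 \ c.1.1) (hb' : b ∈ c'.1.2) : c = c' := by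
  have hfst : c.1.1 = c'.1.1 := by
    rw [(c.isPoint_fst hE hr).eq_closure_singleton ha,
      (c'.isPoint_fst hE hr).eq_closure_singleton ha']
  have hb'' : b ∈ c'.1.2 \ c'.1.1 := ⟨hb', hfst ▸ hb.2⟩
  refine Subtype.ext (Prod.ext hfst ?_)
  rw [(c.isLine_snd hE hr).eq_closure_insert (c.isPoint_fst hE hr) c.2.2.2.subset hb,
    (c'.isLine_snd hE hr).eq_closure_insert (c'.isPoint_fst hE hr) c'.2.2.2.subset hb'', hfst]

lemma sum_indicator_snd_of_fst_eq (hP : M.IsPoint P) :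
    ∑ c : M.Flags, (if c.1.1 = P then c.1.2.indicator (1 : α → ℝ) else 0) =
      ((∑ c : M.Flags, if c.1.1 = P then (1 : ℝ) else 0) - 1) • P.indicator 1 + 1 := by
  ext a
  simp only [Finset.sum_apply, Pi.add_apply, Pi.smul_apply, apply_ite (fun f : α → ℝ ↦ f a),
    Pi.zero_apply, Pi.one_apply, smul_eq_mul]
  by_cases haP : a ∈ P
  · have hsum : ∀ c : M.Flags, (if c.1.1 = P then c.1.2.indicator (1 : α → ℝ) a else 0) =
        if c.1.1 = P then 1 else 0 := fun c ↦ by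
      split_ifs with hc
      · exact indicator_of_mem (c.2.2.2.subset (hc ▸ haP)) _
      · rfl
    simp only [hsum, indicator_of_mem haP, Pi.one_apply]
    ring
  · let c₀ := Flags.ofSubset hE hr hP (hP.isLine_closure_insert ⟨hE ▸ mem_univ a, haP⟩)
      (M.subset_closure_of_subset (subset_insert a P))
    have hac₀ : a ∈ c₀.1.2 := M.mem_closure_of_mem (mem_insert a P)
    obtain ⟨p, hp⟩ := hP.nonempty
    rw [indicator_of_notMem haP, mul_zero, zero_add, Fintype.sum_eq_single c₀]
    · exact (if_pos rfl).trans (indicator_of_mem hac₀ _)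
    · intro c hc
      split_ifs with hcP
      · subst hcP
        exact indicator_of_notMem (fun hac ↦ hc (Flags.eq_of_mem hE hr hp hp ⟨hac, haP⟩ hac₀)) _
      · rfl

lemma sum_indicator_fst_of_snd_eq (hL : M.IsLine L) :
    ∑ c : M.Flags, (if c.1.2 = L then c.1.1.indicator (1 : α → ℝ) else 0) = L.indicator 1 := by
  ext a
  simp only [Finset.sum_apply, apply_ite (fun f : α → ℝ ↦ f a), Pi.zero_apply]
  by_cases haL : a ∈ L
  · let c₀ := Flags.ofMemLine hE hr hL haL
    have hac₀ : a ∈ c₀.1.1 := M.mem_closure_of_mem (mem_singleton a)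
    rw [indicator_of_mem haL, Fintype.sum_eq_single c₀]
    · exact (if_pos rfl).trans (indicator_of_mem hac₀ _)
    · intro c hc
      split_ifs with hcL
      · subst hcL
        obtain ⟨b, hb⟩ := exists_of_ssubset c.2.2.2
        exact indicator_of_notMem (fun hac ↦ hc (Flags.eq_of_mem hE hr hac hac₀ hb hb.1)) _
      · rfl
  · rw [indicator_of_notMem haL]
    refine Finset.sum_eq_zero fun c _ ↦ ?_
    split_ifs with hcL
    · exact indicator_of_notMem (fun hac ↦ haL (hcL ▸ c.2.2.2.subset hac)) _
    · rfl

lemma flagPlucker_of_mem (x : M.Flags → ℝ) (c : M.Flags) (ha : a ∈ c.1.1)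
    (hb : b ∈ c.1.2 \ c.1.1) :
    flagPlucker x a b = x c - x (Flags.ofMemLine hE hr (c.isLine_snd hE hr) hb.1) := by
  set c₁ := Flags.ofMemLine hE hr (c.isLine_snd hE hr) hb.1
  have hbc₁ : b ∈ c₁.1.1 := M.mem_closure_of_mem (mem_singleton b)
  have hac₁ : a ∈ c₁.1.2 \ c₁.1.1 := ⟨c.2.2.2.subset ha, fun hac ↦ hb.2 <| by
    rwa [(c.isPoint_fst hE hr).eq_closure_singleton ha,
      ← (c₁.isPoint_fst hE hr).eq_closure_singleton hac]⟩
  simp only [flagPlucker, pluckerCoord, mul_sub, Finset.sum_sub_distrib]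
  rw [sum_mul_indicator_one_mul_indicator_one x (fun c ↦ c.1.1) (fun c ↦ c.1.2) c fun c' ↦
      ⟨fun h ↦ (Flags.eq_of_mem hE hr ha h.1 hb h.2).symm, fun h ↦ h ▸ ⟨ha, hb.1⟩⟩,
    sum_mul_indicator_one_mul_indicator_one x (fun c ↦ c.1.1) (fun c ↦ c.1.2) c₁ fun c' ↦
      ⟨fun h ↦ (Flags.eq_of_mem hE hr hbc₁ h.1 hac₁ h.2).symm, fun h ↦ h ▸ ⟨hbc₁, hac₁.1⟩⟩]

lemma apply_eq_apply_of_flagBoundary_eq_zero {x : M.ProperFlats → ℝ} (hx : flagBoundary M x = 0)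
    {P Q : M.ProperFlats} (hP : M.IsPoint P.1) (hQ : M.IsPoint Q.1) : x Q = x P := by
  have hx' : ∀ c : M.Flags, x c.fst + x c.snd = 0 := fun c ↦ congrFun hx c
  obtain ⟨b, hb⟩ := hQ.nonempty
  by_cases hbP : b ∈ P.1
  · rw [Subtype.ext ((hQ.eq_closure_singleton hb).trans (hP.eq_closure_singleton hbP).symm)]
  have hL := hP.isLine_closure_insert ⟨hE ▸ mem_univ b, hbP⟩
  have hbL : b ∈ M.closure (insert b P.1) := M.mem_closure_of_mem (mem_insert b _)
  let L : M.ProperFlats := ⟨_, (properFlat_iff hE hr).2 (Or.inr hL)⟩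
  have h₁ : x P + x L = 0 :=
    hx' (Flags.ofSubset hE hr hP hL (M.subset_closure_of_subset (subset_insert _ _)))
  have h₂ : x Q + x L = 0 := hx' (Flags.ofSubset hE hr hQ hL (hQ.subset_of_mem hL.1 hb hbL))
  linarith

lemma ker_flagBoundary : LinearMap.ker (flagBoundary M) = Submodule.span ℝ {pointSign M} := by
  refine le_antisymm (fun x hx ↦ ?_) ?_
  · obtain ⟨P₀, hP₀⟩ := exists_isPoint hE hr
    have hpt : ∀ Q : M.ProperFlats, M.IsPoint Q.1 → x Q = x P₀ := fun Q hQ ↦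
      apply_eq_apply_of_flagBoundary_eq_zero hE hr hx hP₀ hQ
    have hline : ∀ L : M.ProperFlats, M.IsLine L.1 → x L = -x P₀ := by
      intro L hL
      obtain ⟨a, ha⟩ := L.2.2.1
      have hP := isPoint_closure_singleton (M := M) (hE ▸ mem_univ a)
      have h : x ⟨_, (properFlat_iff hE hr).2 (Or.inl hP)⟩ + x L = 0 :=
        congrFun hx (Flags.ofMemLine hE hr hL ha)
      rw [hpt _ hP] at h
      linarith
    have hxP : x = x P₀ • pointSign M := by
      funext F
      rcases (properFlat_iff hE hr).1 F.2 with hF | hF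
      · simp [pointSign, hF, hpt F hF]
      · simp [pointSign, hF.not_isPoint, hline F hF]
    exact hxP ▸ Submodule.smul_mem _ _ (Submodule.mem_span_singleton_self _)
  · rw [Submodule.span_le, singleton_subset_iff, SetLike.mem_coe, LinearMap.mem_ker]
    funext c
    simp [flagBoundary, pointSign, c.isPoint_fst hE hr, (c.isLine_snd hE hr).not_isPoint]

lemma finrank_ker_flagBoundary : Module.finrank ℝ (LinearMap.ker (flagBoundary M)) = 1 := by
  obtain ⟨P₀, hP₀⟩ := exists_isPoint hE hr
  rw [ker_flagBoundary hE hr]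
  exact finrank_span_singleton fun h ↦ by simpa [pointSign, hP₀] using congrFun h P₀

end RankThree

section Wedge

open ExteriorAlgebra

variable {n : ℕ} {M : Matroid (Fin (n + 1))} {F G L P : Set (Fin (n + 1))}

noncomputable def Flags.wedge (c : M.Flags) : ExteriorAlgebra ℝ (BergSpace n) :=
  ι ℝ (eQ c.1.1) * ι ℝ (eQ c.1.2)

noncomputable def flagWedge (M : Matroid (Fin (n + 1))) :
    (M.Flags → ℝ) →ₗ[ℝ] ExteriorAlgebra ℝ (BergSpace n) :=
  Fintype.linearCombination ℝ Flags.wedge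

lemma ι_eQ_mul_ι_eQ_mem_range (hF : ProperFlat M F) (hG : ProperFlat M G)
    (hFG : F ⊆ G ∨ G ⊆ F) : ι ℝ (eQ F) * ι ℝ (eQ G) ∈ LinearMap.range (flagWedge M) := by
  rw [flagWedge, Fintype.range_linearCombination]
  rcases eq_or_ne F G with rfl | hne
  · rw [ι_sq_zero]
    exact zero_mem _
  rcases hFG with hFG | hGF
  · exact Submodule.subset_span ⟨⟨(F, G), hF, hG, hFG.ssubset_of_ne hne⟩, rfl⟩
  · rw [← neg_neg (ι ℝ (eQ F) * _), ← eq_neg_of_add_eq_zero_left (ι_add_mul_swap _ _)]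
    exact neg_mem (Submodule.subset_span ⟨⟨(G, F), hG, hF, hGF.ssubset_of_ne hne.symm⟩, rfl⟩)

lemma FpFan_bergmanFan_two (M : Matroid (Fin (n + 1))) :
    FpFan (bergmanFan M) 2 = LinearMap.range (flagWedge M) := by
  have hpair : ∀ v : Fin 2 → BergSpace n,
      (List.ofFn fun i ↦ ι ℝ (v i)).prod = ι ℝ (v 0) * ι ℝ (v 1) := fun v ↦ by
    simp [List.ofFn_succ]
  refine le_antisymm (Submodule.span_le.2 ?_) ?_
  · rintro _ ⟨_, ⟨c, hc, hchain, rfl⟩, v, hv, rfl⟩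
    have hι : ∀ i, ι ℝ (v i) ∈ Submodule.span ℝ (ι ℝ '' (eQ '' c)) := fun i ↦ by
      rw [Submodule.span_image]
      exact Submodule.mem_map_of_mem (chainCone_subset_span c (hv i))
    have hmul := Submodule.mul_mem_mul (hι 0) (hι 1)
    rw [Submodule.span_mul_span] at hmul
    rw [SetLike.mem_coe, hpair]
    refine Submodule.span_le.2 ?_ hmul
    rintro _ ⟨_, ⟨_, ⟨F, hF, rfl⟩, rfl⟩, _, ⟨_, ⟨G, hG, rfl⟩, rfl⟩, rfl⟩
    exact ι_eQ_mul_ι_eQ_mem_range (hc F hF) (hc G hG) (hchain.total hF hG)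
  · rw [flagWedge, Fintype.range_linearCombination, Submodule.span_le]
    rintro _ ⟨c, rfl⟩
    refine Submodule.subset_span ⟨chainCone {c.1.1, c.1.2}, ⟨{c.1.1, c.1.2}, ?_, ?_, rfl⟩,
      ![-eQ c.1.1, -eQ c.1.2], ?_, ?_⟩
    · simp [c.2.1, c.2.2.1]
    · simpa using IsChain.pair c.2.2.2.subset
    · intro i
      fin_cases i <;> exact neg_eQ_mem_chainCone (by simp)
    · simp [Flags.wedge]

lemma wedgeDual_coordDiff_flagWedge (x : M.Flags → ℝ) (a b c : Fin (n + 1)) :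
    wedgeDual (coordDiff a c) (coordDiff b c) (flagWedge M x) =
      flagPlucker x a b - flagPlucker x a c - flagPlucker x c b := by
  simp only [flagWedge, Fintype.linearCombination_apply, Flags.wedge, map_sum, map_smul,
    smul_eq_mul, wedgeDual_ι_mul_ι, coordDiff_eQ, flagPlucker, pluckerCoord,
    ← Finset.sum_sub_distrib]
  congr! 1 with f
  ring

lemma flagPlucker_eq_sub (x : M.Flags → ℝ) (hx : flagWedge M x = 0) (a b c : Fin (n + 1)) :
    flagPlucker x a b = flagPlucker x a c - flagPlucker x b c := by
  have h := wedgeDual_coordDiff_flagWedge x a b c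
  rw [hx, map_zero, flagPlucker_swap x b c] at h
  linarith

variable [M.Loopless] (hE : M.E = univ) (hr : M.eRank = 3)
include hE hr

lemma exists_sum_eQ_snd_eq_smul (hP : M.IsPoint P) :
    ∃ s : ℝ, ∑ c : M.Flags, (if c.1.1 = P then eQ c.1.2 else 0) = s • eQ P := by
  have h := congrArg (Submodule.mkQ (Submodule.span ℝ {fun _ ↦ (1 : ℝ)}))
    (sum_indicator_snd_of_fst_eq hE hr hP)
  simp only [map_sum, apply_ite, map_zero, map_add, map_smul, Submodule.mkQ_apply] at h
  rw [mk_one_eq_zero, add_zero] at h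
  exact ⟨_, by simpa only [mk_indicator_eq_eQ] using h⟩

lemma sum_eQ_fst_of_snd_eq (hL : M.IsLine L) :
    ∑ c : M.Flags, (if c.1.2 = L then eQ c.1.1 else 0) = eQ L := by
  have h := congrArg (Submodule.mkQ (Submodule.span ℝ {fun _ ↦ (1 : ℝ)}))
    (sum_indicator_fst_of_snd_eq hE hr hL)
  simpa only [map_sum, apply_ite, map_zero, Submodule.mkQ_apply, mk_indicator_eq_eQ] using h

lemma sum_wedge_of_fst_eq (F : Set (Fin (n + 1))) :
    ∑ c : M.Flags, (if c.1.1 = F then c.wedge else 0) = 0 := by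
  by_cases hF : M.IsPoint F
  · obtain ⟨s, hs⟩ := exists_sum_eQ_snd_eq_smul hE hr hF
    calc _ = ι ℝ (eQ F) * ι ℝ (∑ c : M.Flags, if c.1.1 = F then eQ c.1.2 else 0) := by
          rw [map_sum, Finset.mul_sum]
          refine Finset.sum_congr rfl fun c _ ↦ ?_
          split_ifs with hc
          · rw [Flags.wedge, hc]
          · rw [map_zero, mul_zero]
      _ = 0 := by rw [hs, map_smul, mul_smul_comm, ι_sq_zero, smul_zero]
  · exact Finset.sum_eq_zero fun c _ ↦
      if_neg fun (hc : c.1.1 = F) ↦ hF (hc ▸ c.isPoint_fst hE hr)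

lemma sum_wedge_of_snd_eq (F : Set (Fin (n + 1))) :
    ∑ c : M.Flags, (if c.1.2 = F then c.wedge else 0) = 0 := by
  by_cases hF : M.IsLine F
  · calc _ = ι ℝ (∑ c : M.Flags, if c.1.2 = F then eQ c.1.1 else 0) * ι ℝ (eQ F) := by
          rw [map_sum, Finset.sum_mul]
          refine Finset.sum_congr rfl fun c _ ↦ ?_
          split_ifs with hc
          · rw [Flags.wedge, hc]
          · rw [map_zero, zero_mul]
      _ = 0 := by rw [sum_eQ_fst_of_snd_eq hE hr hF, ι_sq_zero]
  · exact Finset.sum_eq_zero fun c _ ↦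
      if_neg fun (hc : c.1.2 = F) ↦ hF (hc ▸ c.isLine_snd hE hr)

lemma flagWedge_comp_flagBoundary : flagWedge M ∘ₗ flagBoundary M = 0 := by
  classical
  refine LinearMap.pi_ext fun F r ↦ ?_
  have hfst : ∀ c : M.Flags, (Pi.single F r : M.ProperFlats → ℝ) c.fst =
      if c.1.1 = F.1 then r else 0 := fun c ↦ by
    simp [Pi.single_apply, Subtype.ext_iff]
  have hsnd : ∀ c : M.Flags, (Pi.single F r : M.ProperFlats → ℝ) c.snd =
      if c.1.2 = F.1 then r else 0 := fun c ↦ by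
    simp [Pi.single_apply, Subtype.ext_iff]
  have hite : ∀ (p : Prop) [Decidable p] (w : ExteriorAlgebra ℝ (BergSpace n)),
      (if p then r else 0) • w = r • if p then w else 0 := fun p _ w ↦ by
    split_ifs <;> simp
  simp only [LinearMap.comp_apply, flagWedge, flagBoundary, Fintype.linearCombination_apply,
    LinearMap.add_apply, LinearMap.funLeft_apply, Pi.add_apply, hfst, hsnd, add_smul, hite,
    Finset.sum_add_distrib, ← Finset.smul_sum, sum_wedge_of_fst_eq hE hr,
    sum_wedge_of_snd_eq hE hr, smul_zero, add_zero, LinearMap.zero_apply]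

lemma exists_flagBoundary_eq_of_flagWedge_eq_zero (x : M.Flags → ℝ) (hx : flagWedge M x = 0) :
    ∃ y, flagBoundary M y = x := by
  set A : Fin (n + 1) → ℝ := fun a ↦ flagPlucker x a 0
  have hA : ∀ a b, flagPlucker x a b = A a - A b := fun a b ↦ flagPlucker_eq_sub x hx a b 0
  choose e he using fun F : M.ProperFlats ↦ F.2.2.1
  classical
  refine ⟨fun F ↦ if hF : M.IsLine F.1 then x (Flags.ofMemLine hE hr hF (he F)) - A (e F)
    else A (e F), ?_⟩
  funext c
  have hP := c.isPoint_fst hE hr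
  have hL := c.isLine_snd hE hr
  simp only [flagBoundary, LinearMap.add_apply, LinearMap.funLeft_apply, Pi.add_apply]
  rw [dif_neg hP.not_isLine, dif_pos hL]
  by_cases hb : e c.snd ∈ c.1.1
  · have hc : Flags.ofMemLine hE hr hL (he c.snd) = c :=
      Subtype.ext (Prod.ext (hP.eq_closure_singleton hb).symm rfl)
    have h := flagPlucker_eq_zero_of_mem x hP (he c.fst) hb
    rw [hA] at h
    rw [hc]
    linarith
  · have h := flagPlucker_of_mem hE hr x c (he c.fst) ⟨he c.snd, hb⟩
    rw [hA] at h
    linarith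

lemma ker_flagWedge : LinearMap.ker (flagWedge M) = LinearMap.range (flagBoundary M) :=
  le_antisymm (fun x hx ↦ exists_flagBoundary_eq_of_flagWedge_eq_zero hE hr x hx)
    (LinearMap.range_le_ker_iff.2 (flagWedge_comp_flagBoundary hE hr))

end Wedge

end Matroid

/-- for the 2-dimensional Bergman fan `X` of a loopless rank-3 matroid,
`dim F₂(X) = 1 - |E(X)| + |F(X)|`, where the rays of `X` are indexed by the proper
nonempty flats of `M` and the 2-dimensional cones by the 2-step chains of such flats;
i.e. the Euler-characteristic count `1 - (#rays) + (#2-cones)` equals `dim F₂(X)`. -/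
theorem dim_F2_bergmanFan_rank_three {n : ℕ} (M : Matroid (Fin (n + 1)))
    (hE : M.E = Set.univ) (hl : MLoopless M) (hrank : mrank M Set.univ = 3) :
    (Module.finrank ℝ (FpFan (bergmanFan M) 2) : ℤ) =
      1 - (Set.ncard {F : Set (Fin (n + 1)) | ProperFlat M F} : ℤ)
        + (Set.ncard {q : Set (Fin (n + 1)) × Set (Fin (n + 1)) |
            ProperFlat M q.1 ∧ ProperFlat M q.2 ∧ q.1 ⊂ q.2} : ℤ) := by
  have := hl.loopless
  have hr : M.eRank = 3 := by rw [← M.eRk_univ_eq, ← coe_mrank, hrank]; rfl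
  have hcount := finrank_range_add_finrank_eq_of_ker_eq_range (Matroid.ker_flagWedge hE hr)
  rw [Matroid.finrank_ker_flagBoundary hE hr, Module.finrank_fintype_fun_eq_card,
    Module.finrank_fintype_fun_eq_card, Fintype.card_eq_nat_card,
    Fintype.card_eq_nat_card] at hcount
  rw [Matroid.FpFan_bergmanFan_two, ← Nat.card_coe_set_eq, ← Nat.card_coe_set_eq]
  change _ = 1 - (Nat.card M.ProperFlats : ℤ) + Nat.card M.Flags
  omega
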